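/- The spider Sp(1^[4], 2^[3]) (four legs of length 1 and three legs of length 2) admits no local antimagic total labeling with exactly 2 distinct vertex weights; hence χ_lat(Sp(1^[4], 2^[3])) = 3. -/

import Mathlib

open Finset

variable {V : Type*} [Fintype V] [DecidableEq V]

/-- The weight of a vertex `u` under the total labeling given by vertex labels `fv`
and edge labels `fe` : `w(u) = f(u) + \sum_{e incident to u} f(e)`. -/
def latWeight (G : SimpleGraph V) [DecidableRel G.Adj]
    (fv : V → ℕ) (fe : Sym2 V → ℕ) (u : V) : ℕ :=
  fv u + ∑ v ∈ G.neighborFinset u, fe s(u, v)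

/-- `fv, fe` together form a bijection from `V(G) ∪ E(G)` onto `{1, …, p + q}`,
where `p` is the order and `q` is the size of `G`. -/
def IsTotalLabeling (G : SimpleGraph V) [DecidableRel G.Adj]
    (fv : V → ℕ) (fe : Sym2 V → ℕ) : Prop :=
  Set.BijOn (Sum.elim fv (fun e : G.edgeSet => fe (e : Sym2 V))) Set.univ
    (Set.Icc 1 (Fintype.card V + G.edgeFinset.card))

/-- A local antimagic total labeling of `G` : a bijective total labeling such that any two
adjacent vertices get distinct weights. -/
def IsLocalAntimagicTotal (G : SimpleGraph V) [DecidableRel G.Adj]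
    (fv : V → ℕ) (fe : Sym2 V → ℕ) : Prop :=
  IsTotalLabeling G fv fe ∧
    ∀ ⦃u v : V⦄, G.Adj u v → latWeight G fv fe u ≠ latWeight G fv fe v

/-- The local antimagic total chromatic number `χ_lat(G)` : the minimum number of distinct
vertex weights taken over all local antimagic total labelings of `G`. -/
noncomputable def chiLat (G : SimpleGraph V) [DecidableRel G.Adj] : ℕ :=
  sInf {c | ∃ fv fe, IsLocalAntimagicTotal G fv fe ∧
    (Finset.univ.image (latWeight G fv fe)).card = c}

instance {W : Type*} (r : W → W → Prop) [DecidableEq W] [DecidableRel r] :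
    DecidableRel (SimpleGraph.fromRel r).Adj :=
  fun a b => decidable_of_iff _ (SimpleGraph.fromRel_adj r a b).symm

/-- Adjacency for the spider `Sp(1^[m], 2^[n])` : the center `x = none` is adjacent to each
leaf `y i = some (Sum.inl i)` and to each `u j = some (Sum.inr (j, false))`, and each `u j`
is adjacent to the leaf `v j = some (Sum.inr (j, true))`. -/
def spider12R (m n : ℕ) :
    Option (Fin m ⊕ Fin n × Bool) → Option (Fin m ⊕ Fin n × Bool) → Bool
  | none, some (Sum.inl _) => true
  | none, some (Sum.inr (_, false)) => true
  | some (Sum.inr (j, false)), some (Sum.inr (j', true)) => decide (j = j')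
  | _, _ => false

/-- The spider `Sp(1^[m], 2^[n])` with `m` legs of length `1` and `n` legs of length `2`. -/
abbrev spider12 (m n : ℕ) : SimpleGraph (Option (Fin m ⊕ Fin n × Bool)) :=
  SimpleGraph.fromRel (fun a b => spider12R m n a b = true)

/-!
In a local antimagic total labeling with only two weights, adjacent vertices get different
weights, so the centre `x` and the feet `v j` share one weight `A` while the leaves `y i` and the
vertices `u j` share the other weight `B`. Summing the weight equations along the legs and
comparing sums of distinct labels from `{1, …, 21}` with the least or greatest sum of that many
labels gives `3B ≥ 2A + 12` and `4B ≤ A + 71`, hence `A ≤ 33`; but `A` is a sum of eight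
distinct labels, so `A ≥ 36`. Three weights are attained, and fewer than two are impossible as
soon as the graph has an edge.
-/

namespace Finset

variable {ι : Type*} {f : ι → ℕ} {s : Finset ι} {c : ℕ}

theorem sum_range_le_sum_of_injOn (hf : Set.InjOn f s) (hs : ∀ i ∈ s, c ≤ f i) :
    ∑ n ∈ range #s, (c + n) ≤ ∑ i ∈ s, f i := by
  have hf' : Set.InjOn (fun i => (f i : ℤ)) s := Nat.cast_injective.comp_injOn hf
  have h := sum_range_le_sum (s := s.image fun i => (f i : ℤ)) (c := c) (by simpa using hs)
  rw [card_image_of_injOn hf', sum_image hf'] at h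
  exact_mod_cast h

theorem sum_le_sum_range_of_injOn (hf : Set.InjOn f s) (hs : ∀ i ∈ s, f i ≤ c) :
    ∑ i ∈ s, f i ≤ ∑ n ∈ range #s, (c - n) := by
  have hf' : Set.InjOn (fun i => (f i : ℤ)) s := Nat.cast_injective.comp_injOn hf
  have h := sum_le_sum_range (s := s.image fun i => (f i : ℤ)) (c := c) (by simpa using hs)
  rw [card_image_of_injOn hf', sum_image hf'] at h
  zify
  exact h.trans (sum_le_sum fun n _ => by omega)

end Finset

namespace IsTotalLabeling

variable {W : Type*} [Fintype W] {G : SimpleGraph W} [DecidableRel G.Adj]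
  {fv : W → ℕ} {fe : Sym2 W → ℕ}

theorem injective (h : IsTotalLabeling G fv fe) :
    Function.Injective (Sum.elim fv fun e : G.edgeSet => fe e) :=
  fun _ _ hab => h.injOn trivial trivial hab

theorem mem_Icc (h : IsTotalLabeling G fv fe) (d : W ⊕ G.edgeSet) :
    Sum.elim fv (fun e : G.edgeSet => fe e) d ∈ Set.Icc 1 (Fintype.card W + #G.edgeFinset) :=
  h.mapsTo trivial

theorem of_image_eq
    (h : univ.image (Sum.elim fv fun e : G.edgeSet => fe e) =
      Icc 1 (Fintype.card W + #G.edgeFinset)) :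
    IsTotalLabeling G fv fe := by
  set ℓ := Sum.elim fv fun e : G.edgeSet => fe e
  have hcard : #(univ.image ℓ) = #(univ : Finset (W ⊕ G.edgeSet)) := by
    simp [h, SimpleGraph.edgeFinset_card]
  have hinj := injOn_of_card_image_eq hcard
  rw [coe_univ] at hinj
  rw [IsTotalLabeling, ← coe_Icc, ← h, coe_image, coe_univ]
  exact hinj.bijOn_image

end IsTotalLabeling

namespace IsLocalAntimagicTotal

variable {W : Type*} [Fintype W] {G : SimpleGraph W} [DecidableRel G.Adj]
  {fv : W → ℕ} {fe : Sym2 W → ℕ}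

theorem two_le_card_image (h : IsLocalAntimagicTotal G fv fe) {a b : W} (hab : G.Adj a b) :
    2 ≤ #(univ.image (latWeight G fv fe)) := by
  rw [← card_pair (h.2 hab)]
  exact card_le_card (by simp [insert_subset_iff])

theorem latWeight_eq_of_adj_of_adj (h : IsLocalAntimagicTotal G fv fe)
    (h2 : #(univ.image (latWeight G fv fe)) ≤ 2) ⦃a b c : W⦄ (hab : G.Adj a b)
    (hbc : G.Adj b c) :
    latWeight G fv fe a = latWeight G fv fe c := by
  by_contra hac
  have hsub : {latWeight G fv fe a, latWeight G fv fe b, latWeight G fv fe c} ⊆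
      univ.image (latWeight G fv fe) := by
    simp [insert_subset_iff]
  have := card_le_card hsub
  rw [card_insert_of_notMem (by simp [h.2 hab, hac]), card_pair (h.2 hbc)] at this
  omega

end IsLocalAntimagicTotal

theorem chiLat_eq_of_isLeast {W : Type*} [Fintype W] {G : SimpleGraph W} [DecidableRel G.Adj]
    {k : ℕ}
    (h : IsLeast {c | ∃ fv fe, IsLocalAntimagicTotal G fv fe ∧
      #(univ.image (latWeight G fv fe)) = c} k) :
    chiLat G = k :=
  h.csInf_eq

namespace Spider12

variable {m n : ℕ}

def x : Option (Fin m ⊕ Fin n × Bool) := none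
def y (i : Fin m) : Option (Fin m ⊕ Fin n × Bool) := some (.inl i)
def u (j : Fin n) : Option (Fin m ⊕ Fin n × Bool) := some (.inr (j, false))
def v (j : Fin n) : Option (Fin m ⊕ Fin n × Bool) := some (.inr (j, true))

theorem adj_x_y (i : Fin m) : (spider12 m n).Adj x (y i) := by simp [x, y, spider12R]

theorem adj_x_u (j : Fin n) : (spider12 m n).Adj x (u j) := by simp [x, u, spider12R]

theorem adj_u_v (j : Fin n) : (spider12 m n).Adj (u j) (v j) := by simp [u, v, spider12R]

theorem injective_elim_y_u : Function.Injective (Sum.elim (y (n := n)) (u (m := m))) := by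
  rintro (_ | _) (_ | _) <;> simp [y, u]

theorem neighborFinset_x :
    (spider12 m n).neighborFinset x = univ.map ⟨Sum.elim y u, injective_elim_y_u⟩ := by
  ext z
  rw [SimpleGraph.mem_neighborFinset]
  rcases z with _ | _ | ⟨_, _ | _⟩ <;> simp [x, y, u, spider12R]

theorem neighborFinset_y (i : Fin m) : (spider12 m n).neighborFinset (y i) = {x} := by
  ext z
  rw [SimpleGraph.mem_neighborFinset]
  rcases z with _ | _ | ⟨_, _ | _⟩ <;> simp [x, y, spider12R]

theorem neighborFinset_u (j : Fin n) : (spider12 m n).neighborFinset (u j) = {x, v j} := by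
  ext z
  rw [SimpleGraph.mem_neighborFinset]
  rcases z with _ | _ | ⟨_, _ | _⟩ <;> simp [x, u, v, spider12R, eq_comm]

theorem neighborFinset_v (j : Fin n) : (spider12 m n).neighborFinset (v j) = {u j} := by
  ext z
  rw [SimpleGraph.mem_neighborFinset]
  rcases z with _ | _ | ⟨_, _ | _⟩ <;> simp [u, v, spider12R, eq_comm]

section Weights

variable (fv : Option (Fin m ⊕ Fin n × Bool) → ℕ)
  (fe : Sym2 (Option (Fin m ⊕ Fin n × Bool)) → ℕ)

theorem latWeight_x :
    latWeight (spider12 m n) fv fe x = fv x + (∑ i, fe s(x, y i) + ∑ j, fe s(x, u j)) := by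
  rw [latWeight, neighborFinset_x, sum_map, Fintype.sum_sum_type]
  rfl

theorem latWeight_y (i : Fin m) :
    latWeight (spider12 m n) fv fe (y i) = fv (y i) + fe s(x, y i) := by
  rw [latWeight, neighborFinset_y, sum_singleton, Sym2.eq_swap]

theorem latWeight_u (j : Fin n) :
    latWeight (spider12 m n) fv fe (u j) = fv (u j) + (fe s(x, u j) + fe s(u j, v j)) := by
  rw [latWeight, neighborFinset_u, sum_pair (by simp [x, v]), Sym2.eq_swap]

theorem latWeight_v (j : Fin n) :
    latWeight (spider12 m n) fv fe (v j) = fv (v j) + fe s(u j, v j) := by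
  rw [latWeight, neighborFinset_v, sum_singleton, Sym2.eq_swap]

end Weights

abbrev VertexOrEdge (m n : ℕ) := Option (Fin m ⊕ Fin n × Bool) ⊕ (spider12 m n).edgeSet

-- Instance search finds this only with a raised `synthInstance.maxSize`.
instance : DecidableEq (VertexOrEdge m n) := instDecidableEqSum

def xy (i : Fin m) : (spider12 m n).edgeSet := ⟨s(x, y i), adj_x_y i⟩
def xu (j : Fin n) : (spider12 m n).edgeSet := ⟨s(x, u j), adj_x_u j⟩
def uv (j : Fin n) : (spider12 m n).edgeSet := ⟨s(u j, v j), adj_u_v j⟩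

theorem false_of_two_weights {g : VertexOrEdge 4 3 → ℕ} (hg : Function.Injective g)
    (hg1 : ∀ d, 1 ≤ g d) (hg21 : ∀ d, g d ≤ 21) {A B : ℕ}
    (hx : g (.inl x) + (∑ i, g (.inr (xy i)) + ∑ j, g (.inr (xu j))) = A)
    (hy : ∀ i, g (.inl (y i)) + g (.inr (xy i)) = B)
    (hu : ∀ j, g (.inl (u j)) + (g (.inr (xu j)) + g (.inr (uv j))) = B)
    (hv : ∀ j, g (.inl (v j)) + g (.inr (uv j)) = A) : False := by
  have hY : ∑ i, g (.inl (y i)) + ∑ i, g (.inr (xy i)) = 4 * B := by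
    simp [← sum_add_distrib, hy]
  have hU : ∑ j, g (.inl (u j)) + (∑ j, g (.inr (xu j)) + ∑ j, g (.inr (uv j))) = 3 * B := by
    simp [← sum_add_distrib, hu]
  have hV : ∑ j, g (.inl (v j)) + ∑ j, g (.inr (uv j)) = 3 * A := by
    simp [← sum_add_distrib, hv]
  have lower := fun s : Finset (VertexOrEdge 4 3) =>
    sum_range_le_sum_of_injOn (c := 1) hg.injOn fun d (_ : d ∈ s) => hg1 d
  have upper := fun s : Finset (VertexOrEdge 4 3) =>
    sum_le_sum_range_of_injOn (c := 21) hg.injOn fun d (_ : d ∈ s) => hg21 d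
  have hcentre := lower {.inl x, .inr (xy 0), .inr (xy 1), .inr (xy 2), .inr (xy 3),
    .inr (xu 0), .inr (xu 1), .inr (xu 2)}
  have hcentre_u := lower {.inl x, .inr (xy 0), .inr (xy 1), .inr (xy 2), .inr (xy 3),
    .inr (xu 0), .inr (xu 1), .inr (xu 2), .inl (u 0), .inl (u 1), .inl (u 2)}
  have hxu := lower {.inr (xu 0), .inr (xu 1), .inr (xu 2)}
  have hv_le := upper {.inl (v 0), .inl (v 1), .inl (v 2)}
  have hy_le := upper {.inl (y 0), .inl (y 1), .inl (y 2), .inl (y 3)}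
  simp +decide only [sum_insert, sum_singleton, mem_insert, mem_singleton, card_insert_of_notMem,
    card_singleton, sum_range_succ, sum_range_zero] at hcentre hcentre_u hxu hv_le hy_le
  simp only [Fin.sum_univ_four, Fin.sum_univ_three] at hx hY hU hV
  have hx1 := hg1 (.inl x)
  -- 3B = Σ u + Σ xu + (3A - Σ v) ≥ (66 - A) + 6 + (3A - 60)
  have hB_ge : 2 * A + 12 ≤ 3 * B := by omega
  -- 4B = Σ y + (A - x - Σ xu) ≤ 78 + A - 1 - 6
  have hB_le : 4 * B ≤ A + 71 := by omega
  omega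

def witnessFv : Option (Fin 4 ⊕ Fin 3 × Bool) → ℕ
  | none => 21
  | some (.inl i) => ![15, 14, 13, 12] i
  | some (.inr (j, false)) => ![18, 16, 11] j
  | some (.inr (j, true)) => ![20, 19, 17] j

def parentEdgeLabel : Option (Fin 4 ⊕ Fin 3 × Bool) → ℕ
  | none => 0
  | some (.inl i) => ![7, 8, 9, 10] i
  | some (.inr (j, false)) => ![1, 2, 5] j
  | some (.inr (j, true)) => ![3, 4, 6] j

-- On each edge of the spider the endpoint farther from `x` has the larger `parentEdgeLabel`.
def witnessFe : Sym2 (Option (Fin 4 ⊕ Fin 3 × Bool)) → ℕ :=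
  Sym2.lift ⟨fun a b => max (parentEdgeLabel a) (parentEdgeLabel b), fun _ _ => max_comm _ _⟩

theorem isLocalAntimagicTotal_witness :
    IsLocalAntimagicTotal (spider12 4 3) witnessFv witnessFe :=
  ⟨IsTotalLabeling.of_image_eq (by decide), by decide⟩

theorem card_image_latWeight_witness :
    #(univ.image (latWeight (spider12 4 3) witnessFv witnessFe)) = 3 := by
  decide

theorem card_image_latWeight_ne_two {fv : Option (Fin 4 ⊕ Fin 3 × Bool) → ℕ}
    {fe : Sym2 (Option (Fin 4 ⊕ Fin 3 × Bool)) → ℕ}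
    (h : IsLocalAntimagicTotal (spider12 4 3) fv fe) :
    #(univ.image (latWeight (spider12 4 3) fv fe)) ≠ 2 := by
  intro h2
  have hw := h.latWeight_eq_of_adj_of_adj h2.le
  have hcard :
      Fintype.card (Option (Fin 4 ⊕ Fin 3 × Bool)) + #(spider12 4 3).edgeFinset = 21 := by
    decide
  refine false_of_two_weights h.1.injective (fun d => (h.1.mem_Icc d).1)
    (fun d => hcard ▸ (h.1.mem_Icc d).2) (B := latWeight (spider12 4 3) fv fe (y 0))
    (latWeight_x fv fe).symm (fun i => ?_) (fun j => ?_) (fun j => ?_)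
  · exact (latWeight_y fv fe i).symm.trans (hw (adj_x_y i).symm (adj_x_y 0))
  · exact (latWeight_u fv fe j).symm.trans (hw (adj_x_u j).symm (adj_x_y 0))
  · exact (latWeight_v fv fe j).symm.trans (hw (adj_u_v j).symm (adj_x_u j).symm)

end Spider12

/-- The spider `Sp(1^[4], 2^[3])` admits no local antimagic total labeling with exactly
`2` distinct vertex weights; hence its local antimagic total chromatic number is `3`. -/
theorem chiLat_spider12_four_three :
    (∀ fv fe, IsLocalAntimagicTotal (spider12 4 3) fv fe →
      (Finset.univ.image (latWeight (spider12 4 3) fv fe)).card ≠ 2) ∧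
    chiLat (spider12 4 3) = 3 := by
  refine ⟨fun _ _ => Spider12.card_image_latWeight_ne_two, chiLat_eq_of_isLeast
    ⟨⟨Spider12.witnessFv, Spider12.witnessFe, Spider12.isLocalAntimagicTotal_witness,
      Spider12.card_image_latWeight_witness⟩, ?_⟩⟩
  rintro c ⟨fv, fe, h, rfl⟩
  have := h.two_le_card_image (Spider12.adj_x_y 0)
  have := Spider12.card_image_latWeight_ne_two h
  omega
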